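/- Let n ≥ 1 and let x, v ∈ ℝⁿ (with the standard inner product) satisfy ‖x‖ = 1 and ⟨x, v⟩ = 0. On E = ℝⁿ × ℝⁿ define the Sasaki metric operator G by G(ω_m, ω_t) := ( ω_m + ⟨v, ω_m⟩ v + ⟨x, ω_t⟩ v , ⟨v, ω_m⟩ x + ω_t ), the subspace T := { (Δ_m, Δ_t) : ⟨x, Δ_m⟩ = 0 and ⟨v, Δ_m⟩ + ⟨x, Δ_t⟩ = 0 } (the tangent space of the tangent bundle of the unit sphere S^{n−1} at the point (x, v)), and the operator P(ω_m, ω_t) := ( ω_m − ⟨x, ω_m⟩ x , ω_t − ⟨v, ω_m⟩ x − ⟨x, ω_t⟩ x ). Then: G is self-adjoint and positive-definite on E; P is idempotent with range T; and P is the orthogonal projection onto T with respect to the inner product ⟨·, G·⟩, i.e. ⟨ω̃ − P ω̃, G η̃⟩ = 0 for all ω̃ ∈ E and all η̃ ∈ T. -/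
import Mathlib

open scoped RealInnerProductSpace

/-- The product inner product on `E × E`. -/
noncomputable def prodInner {E : Type*} [NormedAddCommGroup E] [InnerProductSpace ℝ E]
    (a b : E × E) : ℝ :=
  ⟪a.1, b.1⟫ + ⟪a.2, b.2⟫

theorem stmt14
    (n : ℕ) (hn : 1 ≤ n)
    (x v : EuclideanSpace ℝ (Fin n))
    (hx : ‖x‖ = 1) (hxv : ⟪x, v⟫ = 0)
    (G P : EuclideanSpace ℝ (Fin n) × EuclideanSpace ℝ (Fin n) →
      EuclideanSpace ℝ (Fin n) × EuclideanSpace ℝ (Fin n))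
    (hG : ∀ ω, G ω = (ω.1 + ⟪v, ω.1⟫ • v + ⟪x, ω.2⟫ • v, ⟪v, ω.1⟫ • x + ω.2))
    (hP : ∀ ω, P ω = (ω.1 - ⟪x, ω.1⟫ • x, ω.2 - ⟪v, ω.1⟫ • x - ⟪x, ω.2⟫ • x)) :
    (∀ a b, prodInner (G a) b = prodInner a (G b)) ∧
    (∀ a, a ≠ 0 → 0 < prodInner a (G a)) ∧
    (∀ ω, P (P ω) = P ω) ∧
    (∀ ω, ⟪x, (P ω).1⟫ = 0 ∧ ⟪v, (P ω).1⟫ + ⟪x, (P ω).2⟫ = 0) ∧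
    (∀ η : EuclideanSpace ℝ (Fin n) × EuclideanSpace ℝ (Fin n),
      ⟪x, η.1⟫ = 0 → ⟪v, η.1⟫ + ⟪x, η.2⟫ = 0 → P η = η) ∧
    (∀ ω η : EuclideanSpace ℝ (Fin n) × EuclideanSpace ℝ (Fin n),
      ⟪x, η.1⟫ = 0 → ⟪v, η.1⟫ + ⟪x, η.2⟫ = 0 →
        prodInner (ω - P ω) (G η) = 0) := by
  have hxx : ⟪x, x⟫ = 1 := by
    rw [real_inner_self_eq_norm_sq, hx]; norm_num
  have hvx : ⟪v, x⟫ = 0 := by rw [real_inner_comm]; exact hxv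
  refine ⟨?_, ?_, ?_, ?_, ?_, ?_⟩
  · intro a b
    simp only [prodInner, hG, inner_add_left, inner_add_right, real_inner_smul_left,
      real_inner_smul_right, hvx, hxv]
    rw [real_inner_comm a.1 v, real_inner_comm a.2 x]
    ring
  · intro a ha
    simp only [prodInner, hG, inner_add_right, real_inner_smul_right]
    rw [real_inner_comm a.1 v, real_inner_comm a.2 x,
      real_inner_self_eq_norm_sq, real_inner_self_eq_norm_sq]
    have hcs : ⟪x, a.2⟫ ^ 2 ≤ ‖a.2‖ ^ 2 := by
      have := abs_real_inner_le_norm x a.2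
      rw [hx, one_mul] at this
      nlinarith [abs_nonneg ⟪x, a.2⟫, sq_abs ⟪x, a.2⟫]
    rcases eq_or_ne a.1 0 with h | h
    · have h2 : a.2 ≠ 0 := by
        intro h2; exact ha (Prod.ext h h2)
      have hp : 0 < ‖a.2‖ ^ 2 := pow_pos (norm_pos_iff.mpr h2) 2
      simp only [h, inner_zero_left, inner_zero_right, norm_zero, mul_zero, zero_mul,
        add_zero, zero_add]
      nlinarith
    · have hp : 0 < ‖a.1‖ ^ 2 := pow_pos (norm_pos_iff.mpr h) 2
      rw [real_inner_comm a.2 x] at hcs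
      nlinarith [sq_nonneg (⟪a.1, v⟫ + ⟪a.2, x⟫), hcs, hp]
  · intro ω
    simp only [hP, inner_sub_right, real_inner_smul_right, hxx, hxv, hvx]
    refine Prod.ext ?_ ?_ <;> simp only <;> module
  · intro ω
    simp only [hP, inner_sub_right, real_inner_smul_right, hxx, hxv, hvx]
    constructor <;> ring
  · intro η h1 h2
    have h2' : ⟪v, η.1⟫ = -⟪x, η.2⟫ := by linarith
    simp only [hP, h1, h2']
    refine Prod.ext ?_ ?_ <;> simp only <;> module
  · intro ω η h1 h2
    simp only [prodInner, hP, hG, Prod.fst_sub, Prod.snd_sub, inner_sub_left,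
      inner_add_right, real_inner_smul_left, real_inner_smul_right, inner_sub_right,
      h1, hvx, hxv, hxx]
    linear_combination (⟪v, ω.1⟫ + ⟪x, ω.2⟫) * h2
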